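/- For every integer K ≥ 3, with X = π(4K), the number of positive integers a ≤ X not in A_4 = {π(4k) : k ∈ ℤ⁺} equals 1 + |{1 ≤ k < K : π(4k+4) − π(4k) = 2}|. -/

import Mathlib

/-!
The sequence `f k = π(4k)` is monotone, so the values in `(f k, f (k+1)]` that `f` misses are
exactly those strictly between `f k` and `f (k+1)`: there are `f (k+1) - f k - 1` of them.
Since `4k+2` and `4k+4` are even, `f (k+1) - f k ≤ 2` for `k ≥ 1`, so this count is `1` exactly
when the gap is `2`. Together with the value `1 < f 1 = 2`, these are all missed values up to `f K`.
-/

open Finset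

namespace Nat

theorem primeCounting_add_one (n : ℕ) :
    primeCounting (n + 1) = primeCounting n + if (n + 1).Prime then 1 else 0 :=
  count_succ _ _

theorem primeCounting_add_two_le_of_even {n : ℕ} (hn : 0 < n) (he : Even n) :
    primeCounting (n + 2) ≤ primeCounting n + 1 := by
  have hnp : ¬ (n + 2).Prime := fun hp => by
    have := hp.even_iff.mp (he.add even_two); omega
  rw [primeCounting_add_one (n + 1), if_neg hnp, primeCounting_add_one n]
  split_ifs <;> omega

theorem primeCounting_add_four_le_of_even {n : ℕ} (hn : 0 < n) (he : Even n) :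
    primeCounting (n + 4) ≤ primeCounting n + 2 :=
  calc primeCounting (n + 2 + 2) ≤ primeCounting (n + 2) + 1 :=
        primeCounting_add_two_le_of_even (by omega) (he.add even_two)
    _ ≤ primeCounting n + 2 := by
        have := primeCounting_add_two_le_of_even hn he; omega

end Nat

section MonotoneGaps

variable {f : ℕ → ℕ} {a b : ℕ}

open Classical in
theorem Monotone.filter_Ioc_notMem_image_Ioi (hf : Monotone f) (hab : a ≤ b) :
    (Ioc (f b) (f (b + 1))).filter (· ∉ f '' Set.Ioi a) = Ioo (f b) (f (b + 1)) := by
  ext m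
  simp only [mem_filter, mem_Ioc, mem_Ioo, Set.mem_image, Set.mem_Ioi, not_exists, not_and]
  constructor
  · rintro ⟨⟨hbm, hmb⟩, hm⟩
    exact ⟨hbm, hmb.lt_of_ne fun h => hm (b + 1) (by omega) h.symm⟩
  · rintro ⟨hbm, hmb⟩
    refine ⟨⟨hbm, hmb.le⟩, fun k _ hk => ?_⟩
    rcases le_or_gt k b with hkb | hkb
    · have := hf hkb; omega
    · have := hf (show b + 1 ≤ k by omega); omega

-- Truncated subtraction makes the summand `0` when `f (k + 1) = f k`.
open Classical in
theorem Monotone.card_filter_Ioc_notMem_image_Ioi (hf : Monotone f) (hab : a ≤ b) :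
    ((Ioc (f a) (f b)).filter (· ∉ f '' Set.Ioi a)).card =
      ∑ k ∈ Ico a b, (f (k + 1) - f k - 1) := by
  induction b, hab using Nat.le_induction with
  | base => simp
  | succ b hab ih =>
    rw [← Ioc_union_Ioc_eq_Ioc (hf hab) (hf b.le_succ), filter_union,
      card_union_of_disjoint (disjoint_filter_filter (Ioc_disjoint_Ioc_of_le le_rfl)),
      ih, hf.filter_Ioc_notMem_image_Ioi hab, Nat.card_Ioo, sum_Ico_succ_top hab]

end MonotoneGaps

open Classical in
theorem stmt_15 (K : ℕ) (hK : 3 ≤ K) :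
    ((Finset.Icc 1 (Nat.primeCounting (4 * K))).filter
        (fun a => a ∉ {m : ℕ | ∃ k : ℕ, 0 < k ∧ Nat.primeCounting (4 * k) = m})).card =
      1 + ((Finset.Ico 1 K).filter
          (fun k => Nat.primeCounting (4 * k + 4) - Nat.primeCounting (4 * k) = 2)).card := by
  set f : ℕ → ℕ := fun k => Nat.primeCounting (4 * k)
  have hf : Monotone f := fun i j hij => Nat.monotone_primeCounting (by omega)
  have hf0 : f 0 = 0 := Nat.primeCounting_zero
  have hf1 : f 1 = 2 := by decide
  have hIcc : Icc 1 (f K) = Ioc (f 0) (f K) := by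
    rw [hf0, ← Icc_add_one_left_eq_Ioc, zero_add]
  have hgap (k : ℕ) (hk : 1 ≤ k) : f (k + 1) - f k - 1 =
      if Nat.primeCounting (4 * k + 4) - Nat.primeCounting (4 * k) = 2 then 1 else 0 := by
    show Nat.primeCounting (4 * k + 4) - Nat.primeCounting (4 * k) - 1 = _
    have h1 : Nat.primeCounting (4 * k) ≤ Nat.primeCounting (4 * k + 4) := hf k.le_succ
    have h2 :=
      Nat.primeCounting_add_four_le_of_even (n := 4 * k) (by omega) ⟨2 * k, by ring⟩
    split_ifs <;> omega
  change ((Icc 1 (f K)).filter (· ∉ f '' Set.Ioi 0)).card = _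
  rw [hIcc, hf.card_filter_Ioc_notMem_image_Ioi (Nat.zero_le K),
    sum_eq_sum_Ico_succ_bot (by omega), zero_add, hf1, hf0, card_filter]
  exact congrArg _ (sum_congr rfl fun k hk => hgap k (mem_Ico.mp hk).1)
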